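/- arXiv:2105.10765 — 3 statements merged into one kernel-verified Lean document; each statement's English description precedes it below -/
import Mathlib

section
/- Let Ω ⊆ ℝⁿ be open, let η be an invertible N×N real matrix with ηᵀ = η, let A : Ω → (Fin n → M_N(ℝ)) be a C¹ matrix-valued 1-form whose components satisfy A_k(x)ᵀ·η + η·A_k(x) = 0 for all x ∈ Ω and all k, and let U : Ω → M_N(ℝ) be a C² map with U(x) invertible for every x ∈ Ω. Suppose U satisfies the reduced RT-equation pointwise on Ω: ΔU(x) = U(x)·(δA)(x) − (U(x)ᵀ·η)⁻¹·S(x), where S(x) := Σ_k (∂_kU(x))ᵀ·η·(∂_kU(x)). Then the map w := Uᵀ·η·U − η satisfies Δw = (δA)ᵀ·w + w·(δA) pointwise on Ω. -/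
/-!
With `B a b := aᵀ * η * b` we have `w + η = B U U`, so the Leibniz rule gives
`Δ(UᵀηU) = (ΔU)ᵀηU + 2 S + UᵀηΔU`. The RT-equation turns `UᵀηΔU` into `UᵀηU δA - S`, and its
transpose (`η` and `S` are symmetric) turns `(ΔU)ᵀηU` into `(δA)ᵀ UᵀηU - S`; both `S` cancel.
The Lie algebra condition is linear in `A`, so it passes to `δA`: `(δA)ᵀη + η δA = 0`, which
absorbs the constant `-η` in `w`.
-/

open Matrix

attribute [local instance] Matrix.normedAddCommGroup Matrix.normedSpace

/-- Partial derivative `∂_k f` of a matrix-valued map on `ℝⁿ`, in the `k`-th standard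
coordinate direction (Fréchet derivative applied to the `k`-th basis vector). -/
noncomputable def pderiv3 {n N : ℕ} (f : (Fin n → ℝ) → Matrix (Fin N) (Fin N) ℝ)
    (k : Fin n) (x : Fin n → ℝ) : Matrix (Fin N) (Fin N) ℝ :=
  fderiv ℝ f x (Pi.single k 1)

/-- Euclidean Laplacian `Δ f = Σ_k ∂_k ∂_k f` acting componentwise. -/
noncomputable def lap3 {n N : ℕ} (f : (Fin n → ℝ) → Matrix (Fin N) (Fin N) ℝ)
    (x : Fin n → ℝ) : Matrix (Fin N) (Fin N) ℝ :=
  ∑ k : Fin n, pderiv3 (pderiv3 f k) k x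

/-- Euclidean codifferential `δA = Σ_k ∂_k A_k` of a matrix-valued 1-form. -/
noncomputable def codiff3 {n N : ℕ} (A : (Fin n → ℝ) → Fin n → Matrix (Fin N) (Fin N) ℝ)
    (x : Fin n → ℝ) : Matrix (Fin N) (Fin N) ℝ :=
  ∑ k : Fin n, pderiv3 (fun y => A y k) k x

open Filter Topology

section Pderiv

variable {n N : ℕ} {f g : (Fin n → ℝ) → Matrix (Fin N) (Fin N) ℝ} {k : Fin n} {x : Fin n → ℝ}
  (B : Matrix (Fin N) (Fin N) ℝ →L[ℝ] Matrix (Fin N) (Fin N) ℝ →L[ℝ] Matrix (Fin N) (Fin N) ℝ)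

lemma pderiv3_congr (h : f =ᶠ[𝓝 x] g) : pderiv3 f k x = pderiv3 g k x := by
  rw [pderiv3, pderiv3, h.fderiv_eq]

lemma HasFDerivAt.pderiv3_eq {f' : (Fin n → ℝ) →L[ℝ] Matrix (Fin N) (Fin N) ℝ} (h : HasFDerivAt f f' x) :
    pderiv3 f k x = f' (Pi.single k 1) :=
  congrArg (· (Pi.single k 1)) h.fderiv

lemma pderiv3_sub_const (c : Matrix (Fin N) (Fin N) ℝ) : pderiv3 (fun y => f y - c) k = pderiv3 f k :=
  funext fun y => congrArg (· (Pi.single k 1 : Fin n → ℝ))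
    (fderiv_sub_const (𝕜 := ℝ) (f := f) (x := y) c)

lemma pderiv3_add (hf : DifferentiableAt ℝ f x) (hg : DifferentiableAt ℝ g x) :
    pderiv3 (fun y => f y + g y) k x = pderiv3 f k x + pderiv3 g k x :=
  (hf.hasFDerivAt.add hg.hasFDerivAt).pderiv3_eq

lemma pderiv3_linearMap (T : Matrix (Fin N) (Fin N) ℝ →ₗ[ℝ] Matrix (Fin N) (Fin N) ℝ) (hf : DifferentiableAt ℝ f x) :
    pderiv3 (fun y => T (f y)) k x = T (pderiv3 f k x) :=
  (T.toContinuousLinearMap.hasFDerivAt.comp x hf.hasFDerivAt).pderiv3_eq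

lemma pderiv3_bilinear (hf : DifferentiableAt ℝ f x) (hg : DifferentiableAt ℝ g x) :
    pderiv3 (fun y => B (f y) (g y)) k x = B (pderiv3 f k x) (g x) + B (f x) (pderiv3 g k x) := by
  refine (B.hasFDerivAt_of_bilinear hf.hasFDerivAt hg.hasFDerivAt).pderiv3_eq.trans ?_
  rw [add_comm]
  rfl

lemma ContDiffAt.differentiableAt_pderiv3 (hf : ContDiffAt ℝ 2 f x) :
    DifferentiableAt ℝ (pderiv3 f k) x :=
  ((hf.fderiv_right (m := 1) le_rfl).differentiableAt one_ne_zero).clm_apply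
    (differentiableAt_const _)

lemma pderiv3_pderiv3_bilinear (hf : ContDiffAt ℝ 2 f x) (hg : ContDiffAt ℝ 2 g x) :
    pderiv3 (pderiv3 (fun y => B (f y) (g y)) k) k x =
      B (pderiv3 (pderiv3 f k) k x) (g x) + 2 • B (pderiv3 f k x) (pderiv3 g k x) +
        B (f x) (pderiv3 (pderiv3 g k) k x) := by
  have hfirst : pderiv3 (fun y => B (f y) (g y)) k =ᶠ[𝓝 x]
      fun y => B (pderiv3 f k y) (g y) + B (f y) (pderiv3 g k y) := by
    filter_upwards [hf.eventually (by simp), hg.eventually (by simp)] with y hfy hgy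
    exact pderiv3_bilinear B (hfy.differentiableAt two_ne_zero) (hgy.differentiableAt two_ne_zero)
  have hf₁ := hf.differentiableAt two_ne_zero
  have hg₁ := hg.differentiableAt two_ne_zero
  have hf₂ := hf.differentiableAt_pderiv3 (k := k)
  have hg₂ := hg.differentiableAt_pderiv3 (k := k)
  calc pderiv3 (pderiv3 (fun y => B (f y) (g y)) k) k x
      = pderiv3 (fun y => B (pderiv3 f k y) (g y)) k x +
          pderiv3 (fun y => B (f y) (pderiv3 g k y)) k x :=
        (pderiv3_congr hfirst).trans (pderiv3_add
          (B.hasFDerivAt_of_bilinear hf₂.hasFDerivAt hg₁.hasFDerivAt).differentiableAt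
          (B.hasFDerivAt_of_bilinear hf₁.hasFDerivAt hg₂.hasFDerivAt).differentiableAt)
    _ = _ := by
      rw [pderiv3_bilinear B hf₂ hg₁, pderiv3_bilinear B hf₁ hg₂]
      abel

lemma lap3_sub_const (c : Matrix (Fin N) (Fin N) ℝ) : lap3 (fun y => f y - c) = lap3 f :=
  funext fun y => by simp only [lap3, pderiv3_sub_const]

lemma lap3_bilinear (hf : ContDiffAt ℝ 2 f x) (hg : ContDiffAt ℝ 2 g x) :
    lap3 (fun y => B (f y) (g y)) x =
      B (lap3 f x) (g x) + 2 • ∑ k, B (pderiv3 f k x) (pderiv3 g k x) + B (f x) (lap3 g x) := by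
  simp only [lap3, pderiv3_pderiv3_bilinear B hf hg, Finset.sum_add_distrib, Finset.smul_sum,
    map_sum, _root_.sum_apply]

variable {A : (Fin n → ℝ) → Fin n → Matrix (Fin N) (Fin N) ℝ}

lemma map_codiff3_eq_zero (T : Matrix (Fin N) (Fin N) ℝ →ₗ[ℝ] Matrix (Fin N) (Fin N) ℝ) (hA : ∀ k, DifferentiableAt ℝ (fun y => A y k) x)
    (hT : ∀ᶠ y in 𝓝 x, ∀ k, T (A y k) = 0) :
    T (codiff3 A x) = 0 := by
  rw [codiff3, map_sum]
  refine Finset.sum_eq_zero fun k _ => ?_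
  calc T (pderiv3 (fun y => A y k) k x)
      = pderiv3 (fun y => T (A y k)) k x := (pderiv3_linearMap T (hA k)).symm
    _ = pderiv3 (fun _ => 0) k x := pderiv3_congr (hT.mono fun y hy => hy k)
    _ = 0 := by simp [pderiv3]

lemma codiff3_transpose_mul_add_mul_eq_zero {η : Matrix (Fin N) (Fin N) ℝ}
    (hA : ∀ k, DifferentiableAt ℝ (fun y => A y k) x)
    (hlie : ∀ᶠ y in 𝓝 x, ∀ k, (A y k)ᵀ * η + η * A y k = 0) :
    (codiff3 A x)ᵀ * η + η * codiff3 A x = 0 := by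
  simpa using map_codiff3_eq_zero (LinearMap.mulRight ℝ η ∘ₗ
    (transposeLinearEquiv (Fin N) (Fin N) ℝ ℝ).toLinearMap + LinearMap.mulLeft ℝ η) hA
    (hlie.mono fun y hy k => by simpa using hy k)

end Pderiv

section Algebra

variable {m : Type*} [Fintype m] [DecidableEq m]

noncomputable def transposeMulMulCLM (η : Matrix m m ℝ) :
    Matrix m m ℝ →L[ℝ] Matrix m m ℝ →L[ℝ] Matrix m m ℝ :=
  (LinearMap.mk₂ ℝ (fun a b => aᵀ * η * b) (fun _ _ _ => by simp [add_mul])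
    (fun _ _ _ => by simp) (fun _ _ _ => by simp [mul_add]) (fun _ _ _ => by simp))
    |>.toContinuousBilinearMap

@[simp] lemma transposeMulMulCLM_apply (η a b : Matrix m m ℝ) :
    transposeMulMulCLM η a b = aᵀ * η * b := rfl

variable {R : Type*} [CommRing R] {u η L D S : Matrix m m R}

lemma transpose_mul_mul_of_reducedRT (hu : IsUnit (uᵀ * η)) (hL : L = u * D - (uᵀ * η)⁻¹ * S) :
    uᵀ * η * L = uᵀ * η * u * D - S := by
  rw [hL, mul_sub, ← mul_assoc, mul_nonsing_inv_cancel_left _ _ ((isUnit_iff_isUnit_det _).mp hu)]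

lemma reducedRT_laplacian_identity (hη : ηᵀ = η) (hS : Sᵀ = S) (hu : IsUnit (uᵀ * η))
    (hL : L = u * D - (uᵀ * η)⁻¹ * S) (hD : Dᵀ * η + η * D = 0) :
    Lᵀ * η * u + 2 • S + uᵀ * η * L = Dᵀ * (uᵀ * η * u - η) + (uᵀ * η * u - η) * D := by
  have h₂ := transpose_mul_mul_of_reducedRT hu hL
  have h₁ : Lᵀ * η * u = Dᵀ * (uᵀ * η * u) - S := by
    simpa [transpose_mul, hη, hS, mul_assoc] using congrArg transpose h₂
  rw [h₁, h₂, mul_sub, sub_mul, eq_neg_of_add_eq_zero_left hD]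
  abel

end Algebra

theorem stmt_3 {n N : ℕ} (Ω : Set (Fin n → ℝ)) (hΩ : IsOpen Ω)
    (η : Matrix (Fin N) (Fin N) ℝ) (hη_inv : IsUnit η) (hη_symm : ηᵀ = η)
    (A : (Fin n → ℝ) → Fin n → Matrix (Fin N) (Fin N) ℝ)
    (hA : ContDiffOn ℝ 1 A Ω)
    (hA_lie : ∀ x ∈ Ω, ∀ k : Fin n, (A x k)ᵀ * η + η * A x k = 0)
    (U : (Fin n → ℝ) → Matrix (Fin N) (Fin N) ℝ)
    (hU : ContDiffOn ℝ 2 U Ω)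
    (hU_inv : ∀ x ∈ Ω, IsUnit (U x))
    (hRT : ∀ x ∈ Ω,
      lap3 U x = U x * codiff3 A x -
        ((U x)ᵀ * η)⁻¹ * (∑ k : Fin n, (pderiv3 U k x)ᵀ * η * pderiv3 U k x)) :
    ∀ x ∈ Ω,
      lap3 (fun y => (U y)ᵀ * η * U y - η) x =
        (codiff3 A x)ᵀ * ((U x)ᵀ * η * U x - η) +
          ((U x)ᵀ * η * U x - η) * codiff3 A x := by
  intro x hx
  have hx' := hΩ.mem_nhds hx
  have hUx : ContDiffAt ℝ 2 U x := hU.contDiffAt hx'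
  have hLie := codiff3_transpose_mul_add_mul_eq_zero
    (fun k => differentiableAt_pi.mp ((hA.contDiffAt hx').differentiableAt one_ne_zero) k)
    (eventually_of_mem hx' (hA_lie · ·))
  set S := ∑ k : Fin n, (pderiv3 U k x)ᵀ * η * pderiv3 U k x with hS_def
  have hS : Sᵀ = S := by simp [hS_def, transpose_sum, transpose_mul, hη_symm, mul_assoc]
  have hw := lap3_bilinear (transposeMulMulCLM η) hUx hUx
  simp only [transposeMulMulCLM_apply] at hw
  rw [lap3_sub_const, hw]
  exact reducedRT_laplacian_identity hη_symm hS
    (((isUnit_transpose _).mpr (hU_inv x hx)).mul hη_inv) (hRT x hx) hLie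
end

section
/- Let Ω ⊆ ℝⁿ be open, let η be an N×N real matrix with ηᵀ = η and η·η = 1, let A : Ω → (Fin n → M_N(ℝ)) be a C² matrix-valued 1-form, and let U : Ω → M_N(ℝ) be a C³ map with U(x)ᵀ·η·U(x) = η for every x ∈ Ω (so each U(x) is invertible with U(x)⁻¹ = η·U(x)ᵀ·η). Suppose U satisfies the reduced RT-equation pointwise on Ω: ΔU = U·(δA) − (Uᵀ·η)⁻¹·S, where S(x) := Σ_k (∂_kU(x))ᵀ·η·(∂_kU(x)). Then the matrix-valued 1-form Ã′ with components Ã′_j := A_j − U⁻¹·∂_jU satisfies, pointwise on Ω: (i) δÃ′ = 0, i.e. Σ_k ∂_k(Ã′_k) = 0; and (ii) ΔÃ′_j = (δ(dA))_j − (δ(dU⁻¹ ∧ dU))_j for each j, where dU⁻¹ is the matrix-valued 1-form with components ∂_k(U⁻¹). -/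
/-!
On `Ω` the inverse `U⁻¹` coincides with the smooth map `η Uᵀ η`. Since
`δ(U⁻¹ dU) = Σ_k ∂_k(U⁻¹) ∂_k U + U⁻¹ ΔU` and `Σ_k ∂_k(U⁻¹) ∂_k U = η S`, the reduced RT-equation
says precisely that `δ(U⁻¹ dU) = δA`, which is (i). By symmetry of second derivatives,
`d(U⁻¹ dU) = dU⁻¹ ∧ dU`; applying `Δ = dδ + δd` to `Ã′ = A − U⁻¹ dU`, whose codifferential vanishes
identically on `Ω`, leaves `δdA − δ(dU⁻¹ ∧ dU)`, which is (ii).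
-/

open Matrix

attribute [local instance] Matrix.normedAddCommGroup Matrix.normedSpace

/-- Partial derivative `∂_k f` of a matrix-valued map on `ℝⁿ`, in the `k`-th standard
coordinate direction (Fréchet derivative applied to the `k`-th basis vector). -/
noncomputable def pderiv4 {n N : ℕ} (f : (Fin n → ℝ) → Matrix (Fin N) (Fin N) ℝ)
    (k : Fin n) (x : Fin n → ℝ) : Matrix (Fin N) (Fin N) ℝ :=
  fderiv ℝ f x (Pi.single k 1)

/-- Euclidean Laplacian `Δ f = Σ_k ∂_k ∂_k f` acting componentwise. -/
noncomputable def lap4 {n N : ℕ} (f : (Fin n → ℝ) → Matrix (Fin N) (Fin N) ℝ)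
    (x : Fin n → ℝ) : Matrix (Fin N) (Fin N) ℝ :=
  ∑ k : Fin n, pderiv4 (pderiv4 f k) k x

/-- Euclidean codifferential `δA = Σ_k ∂_k A_k` of a matrix-valued 1-form. -/
noncomputable def codiff4 {n N : ℕ} (A : (Fin n → ℝ) → Fin n → Matrix (Fin N) (Fin N) ℝ)
    (x : Fin n → ℝ) : Matrix (Fin N) (Fin N) ℝ :=
  ∑ k : Fin n, pderiv4 (fun y => A y k) k x

/-- Exterior derivative of a matrix-valued 1-form: `(dA)_{ij} = ∂_i A_j − ∂_j A_i`. -/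
noncomputable def extd4 {n N : ℕ} (A : (Fin n → ℝ) → Fin n → Matrix (Fin N) (Fin N) ℝ)
    (x : Fin n → ℝ) (i j : Fin n) : Matrix (Fin N) (Fin N) ℝ :=
  pderiv4 (fun y => A y j) i x - pderiv4 (fun y => A y i) j x

/-- Euclidean codifferential of a matrix-valued 2-form: `(δF)_j = Σ_k ∂_k F_{kj}`. -/
noncomputable def codiff2form4 {n N : ℕ}
    (F : (Fin n → ℝ) → Fin n → Fin n → Matrix (Fin N) (Fin N) ℝ)
    (x : Fin n → ℝ) (j : Fin n) : Matrix (Fin N) (Fin N) ℝ :=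
  ∑ k : Fin n, pderiv4 (fun y => F y k j) k x

/-- Wedge product of matrix-valued 1-forms: `(ω ∧ u)_{ij} = ω_i·u_j − ω_j·u_i`. -/
noncomputable def wedge4 {n N : ℕ} (ω u : (Fin n → ℝ) → Fin n → Matrix (Fin N) (Fin N) ℝ)
    (x : Fin n → ℝ) (i j : Fin n) : Matrix (Fin N) (Fin N) ℝ :=
  ω x i * u x j - ω x j * u x i

open Set

local notation "𝕄" N:max => Matrix (Fin N) (Fin N) ℝ

theorem ContDiffOn.differentiableAt_of_isOpen {E F : Type*} [NormedAddCommGroup E]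
    [NormedSpace ℝ E] [NormedAddCommGroup F] [NormedSpace ℝ F] {f : E → F} {s : Set E} {x : E}
    {m : WithTop ℕ∞} (hf : ContDiffOn ℝ m f s) (hm : m ≠ 0) (hs : IsOpen s) (hx : x ∈ s) :
    DifferentiableAt ℝ f x :=
  (hf.differentiableOn hm).differentiableAt (hs.mem_nhds hx)

section MatrixCalculus

variable {n N : ℕ} {f g : (Fin n → ℝ) → 𝕄 N} {x : Fin n → ℝ} {k : Fin n} {Ω : Set (Fin n → ℝ)}

theorem Set.EqOn.pderiv4_eqOn (h : EqOn f g Ω) (hΩ : IsOpen Ω) :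
    EqOn (pderiv4 f k) (pderiv4 g k) Ω := fun _ hx => by
  rw [pderiv4, pderiv4, (Filter.eventuallyEq_of_mem (hΩ.mem_nhds hx) h).fderiv_eq]

theorem pderiv4_const (c : 𝕄 N) : pderiv4 (fun _ => c) k x = 0 := by
  simp [pderiv4]

theorem pderiv4_sub (hf : DifferentiableAt ℝ f x) (hg : DifferentiableAt ℝ g x) :
    pderiv4 (fun y => f y - g y) k x = pderiv4 f k x - pderiv4 g k x :=
  DFunLike.congr_fun (fderiv_fun_sub hf hg) _

theorem pderiv4_sum {ι : Type*} (s : Finset ι) {F : ι → (Fin n → ℝ) → 𝕄 N}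
    (hF : ∀ i ∈ s, DifferentiableAt ℝ (F i) x) :
    pderiv4 (fun y => ∑ i ∈ s, F i y) k x = ∑ i ∈ s, pderiv4 (F i) k x :=
  (DFunLike.congr_fun (fderiv_fun_sum hF) _).trans (sum_apply _ _ _)

theorem ContinuousLinearMap.pderiv4_comp (L : 𝕄 N →L[ℝ] 𝕄 N) (hf : DifferentiableAt ℝ f x) :
    pderiv4 (fun y => L (f y)) k x = L (pderiv4 f k x) :=
  DFunLike.congr_fun (L.hasFDerivAt.comp x hf.hasFDerivAt).fderiv _

theorem pderiv4_mul (hf : DifferentiableAt ℝ f x) (hg : DifferentiableAt ℝ g x) :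
    pderiv4 (fun y => f y * g y) k x = pderiv4 f k x * g x + f x * pderiv4 g k x := by
  have h := (LinearMap.mul ℝ (𝕄 N)).toContinuousBilinearMap.fderiv_of_bilinear hf hg
  exact (DFunLike.congr_fun h _).trans (add_comm _ _)

theorem DifferentiableAt.matrix_mul (hf : DifferentiableAt ℝ f x)
    (hg : DifferentiableAt ℝ g x) : DifferentiableAt ℝ (fun y => f y * g y) x :=
  (LinearMap.mul ℝ (𝕄 N)).toContinuousBilinearMap.isBoundedBilinearMap.differentiableAt
    _ |>.comp x (hf.prodMk hg)

theorem ContDiffOn.matrix_mul {m : WithTop ℕ∞} (hf : ContDiffOn ℝ m f Ω)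
    (hg : ContDiffOn ℝ m g Ω) : ContDiffOn ℝ m (fun y => f y * g y) Ω :=
  (LinearMap.mul ℝ (𝕄 N)).toContinuousBilinearMap.isBoundedBilinearMap.contDiff.comp_contDiffOn
    (hf.prodMk hg)

theorem contDiffOn_pderiv4 {m m' : WithTop ℕ∞} (hf : ContDiffOn ℝ m' f Ω) (hΩ : IsOpen Ω)
    (hm : m + 1 ≤ m') : ContDiffOn ℝ m (pderiv4 f k) Ω :=
  (ContinuousLinearMap.apply ℝ (𝕄 N) (Pi.single k 1)).contDiff.comp_contDiffOn
    (hf.fderiv_of_isOpen hΩ hm) |>.congr fun _ _ => rfl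

theorem pderiv4_pderiv4_eq_fderiv_fderiv (i j : Fin n)
    (hf : DifferentiableAt ℝ (fderiv ℝ f) x) :
    pderiv4 (pderiv4 f i) j x = fderiv ℝ (fderiv ℝ f) x (Pi.single j 1) (Pi.single i 1) := by
  set L := ContinuousLinearMap.apply ℝ (𝕄 N) (Pi.single i (1 : ℝ) : Fin n → ℝ)
  have h : fderiv ℝ (fun y => L (fderiv ℝ f y)) x = L.comp (fderiv ℝ (fderiv ℝ f) x) :=
    (L.hasFDerivAt.comp x hf.hasFDerivAt).fderiv
  exact DFunLike.congr_fun h (Pi.single j 1)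

theorem pderiv4_pderiv4_comm (hf : ContDiffOn ℝ 2 f Ω) (hΩ : IsOpen Ω) (hx : x ∈ Ω)
    (i j : Fin n) : pderiv4 (pderiv4 f i) j x = pderiv4 (pderiv4 f j) i x := by
  have hf' : DifferentiableAt ℝ (fderiv ℝ f) x :=
    (hf.fderiv_of_isOpen (m := 1) hΩ (by norm_num)).differentiableAt_of_isOpen one_ne_zero hΩ hx
  have hsymm : IsSymmSndFDerivAt ℝ f x := (hf.contDiffAt (hΩ.mem_nhds hx)).isSymmSndFDerivAt
    (by simp [minSmoothness_of_isRCLikeNormedField])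
  rw [pderiv4_pderiv4_eq_fderiv_fderiv i j hf', pderiv4_pderiv4_eq_fderiv_fderiv j i hf']
  exact hsymm _ _

end MatrixCalculus

section DifferentialForms

variable {n N : ℕ} {x : Fin n → ℝ} {Ω : Set (Fin n → ℝ)}

theorem lap4_congr {f g : (Fin n → ℝ) → 𝕄 N} (h : EqOn f g Ω) (hΩ : IsOpen Ω) (hx : x ∈ Ω) :
    lap4 f x = lap4 g x :=
  Finset.sum_congr rfl fun _ _ => (h.pderiv4_eqOn hΩ).pderiv4_eqOn hΩ hx

theorem codiff4_congr {A B : (Fin n → ℝ) → Fin n → 𝕄 N} (h : EqOn A B Ω) (hΩ : IsOpen Ω)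
    (hx : x ∈ Ω) : codiff4 A x = codiff4 B x :=
  Finset.sum_congr rfl fun k _ =>
    Set.EqOn.pderiv4_eqOn (fun _ hy => congrFun (h hy) k) hΩ hx

theorem codiff2form4_congr {F G : (Fin n → ℝ) → Fin n → Fin n → 𝕄 N} (h : EqOn F G Ω)
    (hΩ : IsOpen Ω) (hx : x ∈ Ω) (j : Fin n) : codiff2form4 F x j = codiff2form4 G x j :=
  Finset.sum_congr rfl fun k _ =>
    Set.EqOn.pderiv4_eqOn (fun _ hy => congrFun (congrFun (h hy) k) j) hΩ hx

theorem codiff4_sub {A B : (Fin n → ℝ) → Fin n → 𝕄 N} (hA : DifferentiableAt ℝ A x)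
    (hB : DifferentiableAt ℝ B x) :
    codiff4 (fun y k => A y k - B y k) x = codiff4 A x - codiff4 B x := by
  rw [codiff4, codiff4, codiff4, ← Finset.sum_sub_distrib]
  exact Finset.sum_congr rfl fun k _ =>
    pderiv4_sub (differentiableAt_pi.1 hA k) (differentiableAt_pi.1 hB k)

theorem extd4_sub {A B : (Fin n → ℝ) → Fin n → 𝕄 N} (hA : DifferentiableAt ℝ A x)
    (hB : DifferentiableAt ℝ B x) (i j : Fin n) :
    extd4 (fun y k => A y k - B y k) x i j = extd4 A x i j - extd4 B x i j := by
  simp only [extd4]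
  rw [pderiv4_sub (differentiableAt_pi.1 hA j) (differentiableAt_pi.1 hB j),
    pderiv4_sub (differentiableAt_pi.1 hA i) (differentiableAt_pi.1 hB i)]
  abel

theorem codiff2form4_sub {F G : (Fin n → ℝ) → Fin n → Fin n → 𝕄 N}
    (hF : DifferentiableAt ℝ F x) (hG : DifferentiableAt ℝ G x) (j : Fin n) :
    codiff2form4 (fun y i l => F y i l - G y i l) x j
      = codiff2form4 F x j - codiff2form4 G x j := by
  rw [codiff2form4, codiff2form4, codiff2form4, ← Finset.sum_sub_distrib]
  exact Finset.sum_congr rfl fun k _ =>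
    pderiv4_sub (differentiableAt_pi.1 (differentiableAt_pi.1 hF k) j)
      (differentiableAt_pi.1 (differentiableAt_pi.1 hG k) j)

theorem contDiffOn_pderiv4_form {m m' : WithTop ℕ∞} {U : (Fin n → ℝ) → 𝕄 N}
    (hU : ContDiffOn ℝ m' U Ω) (hΩ : IsOpen Ω) (hm : m + 1 ≤ m') :
    ContDiffOn ℝ m (fun y k => pderiv4 U k y) Ω :=
  contDiffOn_pi.2 fun _ => contDiffOn_pderiv4 hU hΩ hm

theorem contDiffOn_extd4 {m m' : WithTop ℕ∞} {A : (Fin n → ℝ) → Fin n → 𝕄 N}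
    (hA : ContDiffOn ℝ m' A Ω) (hΩ : IsOpen Ω) (hm : m + 1 ≤ m') :
    ContDiffOn ℝ m (fun y => extd4 A y) Ω :=
  contDiffOn_pi.2 fun i => contDiffOn_pi.2 fun j =>
    (contDiffOn_pderiv4 (contDiffOn_pi.1 hA j) hΩ hm).sub
      (contDiffOn_pderiv4 (contDiffOn_pi.1 hA i) hΩ hm)

theorem contDiffOn_wedge4 {m : WithTop ℕ∞} {ω u : (Fin n → ℝ) → Fin n → 𝕄 N}
    (hω : ContDiffOn ℝ m ω Ω) (hu : ContDiffOn ℝ m u Ω) :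
    ContDiffOn ℝ m (fun y => wedge4 ω u y) Ω :=
  contDiffOn_pi.2 fun i => contDiffOn_pi.2 fun j =>
    ((contDiffOn_pi.1 hω i).matrix_mul (contDiffOn_pi.1 hu j)).sub
      ((contDiffOn_pi.1 hω j).matrix_mul (contDiffOn_pi.1 hu i))

theorem lap4_eq_pderiv4_codiff4_add_codiff2form4_extd4 {C : (Fin n → ℝ) → Fin n → 𝕄 N}
    (hC : ContDiffOn ℝ 2 C Ω) (hΩ : IsOpen Ω) (hx : x ∈ Ω) (j : Fin n) :
    lap4 (fun y => C y j) x = pderiv4 (codiff4 C) j x + codiff2form4 (extd4 C) x j := by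
  have hdC : ∀ k l, DifferentiableAt ℝ (pderiv4 (fun y => C y k) l) x := fun k _ =>
    (contDiffOn_pderiv4 (m := 1) (contDiffOn_pi.1 hC k) hΩ (by norm_num)).differentiableAt_of_isOpen
      one_ne_zero hΩ hx
  have hdδ : pderiv4 (codiff4 C) j x = ∑ k, pderiv4 (pderiv4 (fun y => C y k) j) k x := by
    rw [show codiff4 C = fun y => ∑ k, pderiv4 (fun z => C z k) k y from rfl,
      pderiv4_sum _ fun k _ => hdC k k]
    exact Finset.sum_congr rfl fun k _ => pderiv4_pderiv4_comm (contDiffOn_pi.1 hC k) hΩ hx k j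
  have hδd : codiff2form4 (extd4 C) x j
      = lap4 (fun y => C y j) x - ∑ k, pderiv4 (pderiv4 (fun y => C y k) j) k x := by
    rw [codiff2form4, lap4, ← Finset.sum_sub_distrib]
    exact Finset.sum_congr rfl fun k _ => pderiv4_sub (hdC j k) (hdC k j)
  rw [hdδ, hδd]
  abel

variable {W U : (Fin n → ℝ) → 𝕄 N}

theorem codiff4_mul_pderiv4 (hW : DifferentiableAt ℝ W x)
    (hU : ∀ k, DifferentiableAt ℝ (pderiv4 U k) x) :
    codiff4 (fun y k => W y * pderiv4 U k y) x
      = ∑ k, pderiv4 W k x * pderiv4 U k x + W x * lap4 U x := by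
  rw [codiff4, lap4, Finset.mul_sum, ← Finset.sum_add_distrib]
  exact Finset.sum_congr rfl fun k _ => pderiv4_mul hW (hU k)

theorem extd4_mul_pderiv4 (hW : DifferentiableAt ℝ W x) (hU : ContDiffOn ℝ 2 U Ω)
    (hΩ : IsOpen Ω) (hx : x ∈ Ω) (i j : Fin n) :
    extd4 (fun y k => W y * pderiv4 U k y) x i j
      = wedge4 (fun y k => pderiv4 W k y) (fun y k => pderiv4 U k y) x i j := by
  have hdU : ∀ k, DifferentiableAt ℝ (pderiv4 U k) x := fun _ =>
    (contDiffOn_pderiv4 (m := 1) hU hΩ (by norm_num)).differentiableAt_of_isOpen one_ne_zero hΩ hx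
  simp only [extd4, wedge4]
  rw [pderiv4_mul hW (hdU j), pderiv4_mul hW (hdU i), pderiv4_pderiv4_comm hU hΩ hx j i]
  abel

theorem lap4_sub_mul_pderiv4 {A : (Fin n → ℝ) → Fin n → 𝕄 N} (hA : ContDiffOn ℝ 2 A Ω)
    (hW : ContDiffOn ℝ 2 W Ω) (hU : ContDiffOn ℝ 3 U Ω) (hΩ : IsOpen Ω) (hx : x ∈ Ω)
    (j : Fin n) :
    lap4 (fun y => A y j - W y * pderiv4 U j y) x
      = pderiv4 (codiff4 fun y k => A y k - W y * pderiv4 U k y) j x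
        + (codiff2form4 (fun y => extd4 A y) x j
          - codiff2form4 (wedge4 (fun y k => pderiv4 W k y) (fun y k => pderiv4 U k y)) x j) := by
  have hB : ContDiffOn ℝ 2 (fun y k => W y * pderiv4 U k y) Ω :=
    contDiffOn_pi.2 fun k => hW.matrix_mul (contDiffOn_pderiv4 hU hΩ (by norm_num))
  have hdA : ∀ y ∈ Ω, DifferentiableAt ℝ A y := fun y hy =>
    hA.differentiableAt_of_isOpen two_ne_zero hΩ hy
  have hdB : ∀ y ∈ Ω, DifferentiableAt ℝ (fun z k => W z * pderiv4 U k z) y := fun y hy =>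
    hB.differentiableAt_of_isOpen two_ne_zero hΩ hy
  have hU2 : ContDiffOn ℝ 2 U Ω := hU.of_le (by norm_num)
  have hextd : EqOn (extd4 fun y k => A y k - W y * pderiv4 U k y)
      (fun y i l => extd4 A y i l
        - wedge4 (fun y k => pderiv4 W k y) (fun y k => pderiv4 U k y) y i l) Ω := by
    intro y hy
    funext i l
    rw [extd4_sub (hdA y hy) (hdB y hy),
      extd4_mul_pderiv4 (hW.differentiableAt_of_isOpen two_ne_zero hΩ hy) hU2 hΩ hy]
  have hC : ContDiffOn ℝ 2 (fun y k => A y k - W y * pderiv4 U k y) Ω := hA.sub hB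
  rw [lap4_eq_pderiv4_codiff4_add_codiff2form4_extd4 hC hΩ hx j,
    codiff2form4_congr hextd hΩ hx,
    codiff2form4_sub ((contDiffOn_extd4 (m := 1) hA hΩ (by norm_num)).differentiableAt_of_isOpen
      one_ne_zero hΩ hx)
      ((contDiffOn_wedge4 (m := 1) (contDiffOn_pderiv4_form hW hΩ (by norm_num))
        (contDiffOn_pderiv4_form hU hΩ (by norm_num))).differentiableAt_of_isOpen
          one_ne_zero hΩ hx)]

end DifferentialForms

section ReducedRT

variable {n N : ℕ}

/-- For `η * η = 1` and `uᵀ * η * u = η` this map sends `u` to `u⁻¹`; unlike `Matrix.inv` it is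
linear, hence smooth everywhere. -/
noncomputable def formAdjointCLM (η : 𝕄 N) : 𝕄 N →L[ℝ] 𝕄 N :=
  LinearMap.toContinuousLinearMap <| LinearMap.mulRight ℝ η ∘ₗ LinearMap.mulLeft ℝ η ∘ₗ
    (Matrix.transposeLinearEquiv (Fin N) (Fin N) ℝ ℝ).toLinearMap

theorem formAdjointCLM_apply (η a : 𝕄 N) : formAdjointCLM η a = η * aᵀ * η := rfl

theorem pderiv4_formAdjoint {U : (Fin n → ℝ) → 𝕄 N} {x : Fin n → ℝ} {k : Fin n} (η : 𝕄 N)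
    (hU : DifferentiableAt ℝ U x) :
    pderiv4 (fun y => η * (U y)ᵀ * η) k x = η * (pderiv4 U k x)ᵀ * η := by
  simpa only [formAdjointCLM_apply] using (formAdjointCLM η).pderiv4_comp (k := k) hU

theorem ContDiffOn.formAdjoint {U : (Fin n → ℝ) → 𝕄 N} {Ω : Set (Fin n → ℝ)} {m : WithTop ℕ∞}
    (η : 𝕄 N) (hU : ContDiffOn ℝ m U Ω) : ContDiffOn ℝ m (fun y => η * (U y)ᵀ * η) Ω :=
  (formAdjointCLM η).contDiff.comp_contDiffOn hU

variable {η u : 𝕄 N}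

theorem formAdjoint_mul_self (hη : η * η = 1) (hu : uᵀ * η * u = η) : η * uᵀ * η * u = 1 := by
  rw [mul_assoc, mul_assoc, ← mul_assoc uᵀ, hu, hη]

theorem inv_eq_formAdjoint (hη : η * η = 1) (hu : uᵀ * η * u = η) : u⁻¹ = η * uᵀ * η :=
  inv_eq_left_inv (formAdjoint_mul_self hη hu)

theorem inv_transpose_mul_eq (hη : η * η = 1) (hu : uᵀ * η * u = η) : (uᵀ * η)⁻¹ = u * η := by
  refine inv_eq_left_inv ?_
  rw [mul_assoc, ← mul_assoc η]
  exact mul_eq_one_comm.1 (formAdjoint_mul_self hη hu)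

theorem codiff4_sub_formAdjoint_mul_pderiv4_eq_zero {Ω : Set (Fin n → ℝ)} (hΩ : IsOpen Ω)
    (hη : η * η = 1) {A : (Fin n → ℝ) → Fin n → 𝕄 N} (hA : ContDiffOn ℝ 1 A Ω)
    {U : (Fin n → ℝ) → 𝕄 N} (hU : ContDiffOn ℝ 2 U Ω) (hU_grp : ∀ x ∈ Ω, (U x)ᵀ * η * U x = η)
    (hRT : ∀ x ∈ Ω, lap4 U x = U x * codiff4 A x -
      ((U x)ᵀ * η)⁻¹ * (∑ k : Fin n, (pderiv4 U k x)ᵀ * η * pderiv4 U k x))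
    (x : Fin n → ℝ) (hx : x ∈ Ω) :
    codiff4 (fun y k => A y k - η * (U y)ᵀ * η * pderiv4 U k y) x = 0 := by
  have hdU : DifferentiableAt ℝ U x := hU.differentiableAt_of_isOpen two_ne_zero hΩ hx
  have hdW : DifferentiableAt ℝ (fun y => η * (U y)ᵀ * η) x :=
    (hU.formAdjoint η).differentiableAt_of_isOpen two_ne_zero hΩ hx
  have hddU : ∀ k, DifferentiableAt ℝ (pderiv4 U k) x := fun _ =>
    (contDiffOn_pderiv4 (m := 1) hU hΩ (by norm_num)).differentiableAt_of_isOpen one_ne_zero hΩ hx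
  have hdB : DifferentiableAt ℝ (fun y k => η * (U y)ᵀ * η * pderiv4 U k y) x :=
    differentiableAt_pi.2 fun k => hdW.matrix_mul (hddU k)
  have hRTx := hRT x hx
  set S := ∑ k : Fin n, (pderiv4 U k x)ᵀ * η * pderiv4 U k x
  have hsum : ∑ k, pderiv4 (fun y => η * (U y)ᵀ * η) k x * pderiv4 U k x = η * S := by
    rw [Finset.mul_sum]
    exact Finset.sum_congr rfl fun k _ => by
      rw [pderiv4_formAdjoint η hdU]; simp only [mul_assoc]
  have hWU := formAdjoint_mul_self hη (hU_grp x hx)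
  have hlap : η * (U x)ᵀ * η * lap4 U x = codiff4 A x - η * S := by
    rw [hRTx, inv_transpose_mul_eq hη (hU_grp x hx)]
    simp only [mul_sub, ← mul_assoc, hWU, one_mul]
  rw [codiff4_sub (hA.differentiableAt_of_isOpen one_ne_zero hΩ hx) hdB,
    codiff4_mul_pderiv4 hdW hddU, hsum, hlap]
  abel

end ReducedRT

theorem stmt_4_general {n N : ℕ} (Ω : Set (Fin n → ℝ)) (hΩ : IsOpen Ω)
    (η : Matrix (Fin N) (Fin N) ℝ) (hη_sq : η * η = 1)
    (A : (Fin n → ℝ) → Fin n → Matrix (Fin N) (Fin N) ℝ)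
    (hA : ContDiffOn ℝ 2 A Ω)
    (U : (Fin n → ℝ) → Matrix (Fin N) (Fin N) ℝ)
    (hU : ContDiffOn ℝ 3 U Ω)
    (hU_grp : ∀ x ∈ Ω, (U x)ᵀ * η * U x = η)
    (hRT : ∀ x ∈ Ω,
      lap4 U x = U x * codiff4 A x -
        ((U x)ᵀ * η)⁻¹ * (∑ k : Fin n, (pderiv4 U k x)ᵀ * η * pderiv4 U k x)) :
    (∀ x ∈ Ω,
      codiff4 (fun y k => A y k - (U y)⁻¹ * pderiv4 U k y) x = 0) ∧
    (∀ x ∈ Ω, ∀ j : Fin n,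
      lap4 (fun y => A y j - (U y)⁻¹ * pderiv4 U j y) x =
        codiff2form4 (fun y => extd4 A y) x j -
          codiff2form4
            (wedge4 (fun y k => pderiv4 (fun z => (U z)⁻¹) k y)
              (fun y k => pderiv4 U k y)) x j) := by
  have hinv : EqOn (fun y => (U y)⁻¹) (fun y => η * (U y)ᵀ * η) Ω := fun y hy =>
    inv_eq_formAdjoint hη_sq (hU_grp y hy)
  have hgauge : EqOn (fun y k => A y k - (U y)⁻¹ * pderiv4 U k y)
      (fun y k => A y k - η * (U y)ᵀ * η * pderiv4 U k y) Ω := fun y hy => by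
    simp only [hinv hy]
  have hδ := codiff4_sub_formAdjoint_mul_pderiv4_eq_zero hΩ hη_sq (hA.of_le (by norm_num))
    (hU.of_le (by norm_num)) hU_grp hRT
  refine ⟨fun x hx => (codiff4_congr hgauge hΩ hx).trans (hδ x hx), fun x hx j => ?_⟩
  have hdδ : pderiv4 (codiff4 fun y k => A y k - η * (U y)ᵀ * η * pderiv4 U k y) j x = 0 :=
    (Set.EqOn.pderiv4_eqOn (g := fun _ => 0) hδ hΩ hx).trans (pderiv4_const 0)
  have hwedge : EqOn (wedge4 (fun y k => pderiv4 (fun z => (U z)⁻¹) k y) (fun y k => pderiv4 U k y))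
      (wedge4 (fun y k => pderiv4 (fun z => η * (U z)ᵀ * η) k y) (fun y k => pderiv4 U k y)) Ω :=
    fun y hy => by
      funext i l
      rw [wedge4, wedge4, hinv.pderiv4_eqOn hΩ hy, hinv.pderiv4_eqOn hΩ hy]
  rw [lap4_congr (fun y hy => congrFun (hgauge hy) j) hΩ hx,
    lap4_sub_mul_pderiv4 hA (hU.formAdjoint η |>.of_le (by norm_num)) hU hΩ hx, hdδ, zero_add,
    codiff2form4_congr hwedge hΩ hx]

theorem stmt_4 {n N : ℕ} (Ω : Set (Fin n → ℝ)) (hΩ : IsOpen Ω)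
    (η : Matrix (Fin N) (Fin N) ℝ) (hη_symm : ηᵀ = η) (hη_sq : η * η = 1)
    (A : (Fin n → ℝ) → Fin n → Matrix (Fin N) (Fin N) ℝ)
    (hA : ContDiffOn ℝ 2 A Ω)
    (U : (Fin n → ℝ) → Matrix (Fin N) (Fin N) ℝ)
    (hU : ContDiffOn ℝ 3 U Ω)
    (hU_grp : ∀ x ∈ Ω, (U x)ᵀ * η * U x = η)
    (hRT : ∀ x ∈ Ω,
      lap4 U x = U x * codiff4 A x -
        ((U x)ᵀ * η)⁻¹ * (∑ k : Fin n, (pderiv4 U k x)ᵀ * η * pderiv4 U k x)) :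
    (∀ x ∈ Ω,
      codiff4 (fun y k => A y k - (U y)⁻¹ * pderiv4 U k y) x = 0) ∧
    (∀ x ∈ Ω, ∀ j : Fin n,
      lap4 (fun y => A y j - (U y)⁻¹ * pderiv4 U j y) x =
        codiff2form4 (fun y => extd4 A y) x j -
          codiff2form4
            (wedge4 (fun y k => pderiv4 (fun z => (U z)⁻¹) k y)
              (fun y k => pderiv4 U k y)) x j) :=
  stmt_4_general Ω hΩ η hη_sq A hA U hU hU_grp hRT
end

section
/- Let X be a normed real vector space, let C₁, C₂, M be real numbers with C₁ ≥ 1, C₂ ≥ 1, M ≥ 1, and let ε > 0 satisfy ε ≤ 1/(4·C₁²·M) and ε·( M + C₂·(M + 10·C₁·M) ) ≤ 1/2. Let v : ℝ → X be such that: (i) ‖v(λ)‖ ≤ 2·C₁·M for all λ ∈ (0,1]; and (ii) for all λ, λ′ ∈ (0,1]: ‖v(λ) − v(λ′)‖ ≤ M·|λ − λ′| + ε·M·‖λ·v(λ) − λ′·v(λ′)‖ + ε·C₂·( M + C(λ,λ′) )·‖v(λ) − v(λ′)‖, where C(λ,λ′) := (1 + ε·‖v(λ′)‖)·( ‖v(λ)‖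 + ‖v(λ′)‖ ) + ε·‖v(λ)‖. Then for all λ, λ′ ∈ (0,1]: ‖v(λ) − v(λ′)‖ ≤ 4·M·|λ − λ′|. -/
set_option maxHeartbeats 800000

theorem stmt_9 {X : Type*} [NormedAddCommGroup X] [NormedSpace ℝ X]
    (C₁ C₂ M ε : ℝ) (hC₁ : 1 ≤ C₁) (hC₂ : 1 ≤ C₂) (hM : 1 ≤ M)
    (hε_pos : 0 < ε)
    (hε₁ : ε ≤ 1 / (4 * C₁ ^ 2 * M))
    (hε₂ : ε * (M + C₂ * (M + 10 * C₁ * M)) ≤ 1 / 2)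
    (v : ℝ → X)
    (hbound : ∀ lam ∈ Set.Ioc (0 : ℝ) 1, ‖v lam‖ ≤ 2 * C₁ * M)
    (hdiff : ∀ lam ∈ Set.Ioc (0 : ℝ) 1, ∀ lam' ∈ Set.Ioc (0 : ℝ) 1,
      ‖v lam - v lam'‖ ≤
        M * |lam - lam'| + ε * M * ‖lam • v lam - lam' • v lam'‖ +
          ε * C₂ * (M + ((1 + ε * ‖v lam'‖) * (‖v lam‖ + ‖v lam'‖) + ε * ‖v lam‖)) *
            ‖v lam - v lam'‖) :
    ∀ lam ∈ Set.Ioc (0 : ℝ) 1, ∀ lam' ∈ Set.Ioc (0 : ℝ) 1,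
      ‖v lam - v lam'‖ ≤ 4 * M * |lam - lam'| := by
  intro lam hl lam' hl'
  have hC₁M : (1:ℝ) ≤ C₁ * M := one_le_mul_of_one_le_of_one_le hC₁ hM
  have hpos : (0:ℝ) < 4 * C₁ ^ 2 * M := by positivity
  have hε₁' : ε * (4 * C₁ ^ 2 * M) ≤ 1 := by
    rw [le_div_iff₀ hpos] at hε₁; linarith
  have ha := hbound lam hl
  have hb := hbound lam' hl'
  have hd := hdiff lam hl lam' hl' 
  set a := ‖v lam‖ with ha_def
  set b := ‖v lam'‖ with hb_def
  set D := ‖v lam - v lam'‖ with hD_def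
  have ha0 : 0 ≤ a := norm_nonneg _
  have hb0 : 0 ≤ b := norm_nonneg _
  have hD0 : 0 ≤ D := norm_nonneg _
  -- bound on ‖lam • v lam - lam' • v lam'‖
  have hsplit : lam • v lam - lam' • v lam' =
      (lam - lam') • v lam + lam' • (v lam - v lam') := by
    rw [sub_smul, smul_sub]; abel
  have hlam' : |lam'| ≤ 1 := by
    rw [abs_of_pos hl'.1]; exact hl'.2
  have hS : ‖lam • v lam - lam' • v lam'‖ ≤ |lam - lam'| * (2 * C₁ * M) + D := by
    rw [hsplit]
    calc ‖(lam - lam') • v lam + lam' • (v lam - v lam')‖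
        ≤ ‖(lam - lam') • v lam‖ + ‖lam' • (v lam - v lam')‖ := norm_add_le _ _
      _ = |lam - lam'| * a + |lam'| * D := by rw [norm_smul, norm_smul]; rfl
      _ ≤ |lam - lam'| * (2 * C₁ * M) + 1 * D := by
          gcongr
      _ = |lam - lam'| * (2 * C₁ * M) + D := by ring
  -- ε * a ≤ 1/2, ε * b ≤ 1/2
  have hεa : ε * a ≤ 1 / 2 := by nlinarith [mul_le_mul_of_nonneg_left ha hε_pos.le]
  have hεb : ε * b ≤ 1 / 2 := by nlinarith [mul_le_mul_of_nonneg_left hb hε_pos.le]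
  -- the C-term is ≤ 10 C₁ M
  have hC : (1 + ε * b) * (a + b) + ε * a ≤ 10 * C₁ * M := by
    nlinarith [mul_le_mul (by linarith : 1 + ε * b ≤ 3/2)
      (by linarith : a + b ≤ 4 * C₁ * M) (by linarith) (by norm_num)]
  -- coefficient of D is ≤ 1/2
  have hcoef : ε * M + ε * C₂ * (M + ((1 + ε * b) * (a + b) + ε * a)) ≤ 1 / 2 := by
    have h1 : ε * C₂ * (M + ((1 + ε * b) * (a + b) + ε * a)) ≤
        ε * C₂ * (M + 10 * C₁ * M) := by
      apply mul_le_mul_of_nonneg_left _ (by positivity)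
      linarith
    nlinarith
  have hεM : ε * C₁ * M ≤ 1 / 4 := by nlinarith
  have hmainS : ε * M * ‖lam • v lam - lam' • v lam'‖ ≤
      ε * M * (|lam - lam'| * (2 * C₁ * M) + D) :=
    mul_le_mul_of_nonneg_left hS (by positivity)
  have key : D ≤ M * |lam - lam'| + ε * M * (|lam - lam'| * (2 * C₁ * M) + D) +
      (ε * C₂ * (M + ((1 + ε * b) * (a + b) + ε * a))) * D := by
    linarith
  have habs : 0 ≤ |lam - lam'| := abs_nonneg _
  -- from key: D/2 ≤ M|Δ| + 2 ε C₁ M² |Δ| ≤ 2 M |Δ|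
  nlinarith [mul_le_mul_of_nonneg_left hcoef hD0,
    mul_le_mul_of_nonneg_left hεM (mul_nonneg habs (by linarith : (0:ℝ) ≤ M))]
end
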